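/- arXiv:1705.07105 — 2 statements merged into one kernel-verified Lean document; each statement's English description precedes it below -/
import Mathlib

section
/- Let K = ⟨T,A⟩ be a DL-Lite_core^bag ontology and R an atomic role. Then: (i) the multiplicity of every pair of individuals (a,b) in R under the canonical bag model satisfies R^{C(K)}(a,b) = R^{C(⟨∅,A⟩)}(a,b) = A(R(a,b)), and likewise for the inverse of R; and (ii) for the CQ q(x) = R(x,x) and every individual a, the bag answer q^{C(K)}(a) equals q^{C(⟨∅,A⟩)}(a). -/
/-!
Common formalization of the bag semantics of DL-Lite ontologies
(Nikolaou et al., "The Bag Semantics of Ontology-Based Data Access").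
-/

open scoped Classical

noncomputable section

/-- Individuals (constants). -/
abbrev Ind : Type := ℕ
/-- Variables. -/
abbrev Var : Type := ℕ
/-- Atomic concepts (unary predicates). -/
abbrev AtomicConcept : Type := ℕ
/-- Atomic roles (binary predicates). -/
abbrev AtomicRole : Type := ℕ

/-- A role is an atomic role or its inverse. -/
inductive Role where
  | atomic : AtomicRole → Role
  | inv : AtomicRole → Role
  deriving DecidableEq

/-- A concept is an atomic concept or `∃R` for a role `R`. -/
inductive DLConcept where
  | atomic : AtomicConcept → DLConcept
  | ex : Role → DLConcept
  deriving DecidableEq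

/-- TBox axioms: inclusions and disjointness axioms between concepts or roles. -/
inductive TBoxAxiom where
  | cIncl : DLConcept → DLConcept → TBoxAxiom
  | rIncl : Role → Role → TBoxAxiom
  | cDisj : DLConcept → DLConcept → TBoxAxiom
  | rDisj : Role → Role → TBoxAxiom
  deriving DecidableEq

/-- A DL-Lite_R TBox: a finite set of TBox axioms. -/
abbrev TBox : Type := Finset TBoxAxiom

/-- A DL-Lite_core TBox: only concept inclusions and concept disjointness axioms. -/
def TBox.IsCore (T : TBox) : Prop :=
  ∀ ax ∈ T, (∃ C D, ax = TBoxAxiom.cIncl C D) ∨ (∃ C D, ax = TBoxAxiom.cDisj C D)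

/-- ABox assertions. -/
inductive Assertion where
  | conceptA : AtomicConcept → Ind → Assertion
  | roleA : AtomicRole → Ind → Ind → Assertion
  deriving DecidableEq

/-- A bag ABox: a finite bag of assertions (represented as a multiset). -/
abbrev BagABox : Type := Multiset Assertion

/-- Multiplicity of an assertion in a bag ABox, as an extended natural. -/
def BagABox.mult (A : BagABox) (s : Assertion) : ℕ∞ := (A.count s : ℕ∞)

/-- Sum of an arbitrary family of extended naturals. -/
def bagSum {α : Type*} (f : α → ℕ∞) : ℕ∞ := ⨆ s : Finset α, ∑ x ∈ s, f x

/-- A bag interpretation. -/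
structure BagInterp : Type 1 where
  Δ : Type
  dne : Nonempty Δ
  indMap : Ind → Δ
  indInj : Function.Injective indMap
  cI : AtomicConcept → Δ → ℕ∞
  rI : AtomicRole → Δ → Δ → ℕ∞

/-- Extension of the interpretation function to roles. -/
def BagInterp.roleMult (I : BagInterp) : Role → I.Δ → I.Δ → ℕ∞
  | Role.atomic P => fun u v => I.rI P u v
  | Role.inv P => fun u v => I.rI P v u

/-- Extension of the interpretation function to concepts. -/
def BagInterp.conceptMult (I : BagInterp) : DLConcept → I.Δ → ℕ∞
  | DLConcept.atomic A => fun u => I.cI A u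
  | DLConcept.ex R => fun u => bagSum (fun v => I.roleMult R u v)

/-- Multiplicity of an assertion in a bag interpretation. -/
def BagInterp.assertMult (I : BagInterp) : Assertion → ℕ∞
  | Assertion.conceptA A a => I.cI A (I.indMap a)
  | Assertion.roleA P a b => I.rI P (I.indMap a) (I.indMap b)

/-- Satisfaction of a TBox axiom by a bag interpretation. -/
def BagInterp.SatisfiesAx (I : BagInterp) : TBoxAxiom → Prop
  | TBoxAxiom.cIncl C D => ∀ u, I.conceptMult C u ≤ I.conceptMult D u
  | TBoxAxiom.rIncl R S => ∀ u v, I.roleMult R u v ≤ I.roleMult S u v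
  | TBoxAxiom.cDisj C D => ∀ u, min (I.conceptMult C u) (I.conceptMult D u) = 0
  | TBoxAxiom.rDisj R S => ∀ u v, min (I.roleMult R u v) (I.roleMult S u v) = 0

/-- A DL-Lite^bag ontology. -/
structure Ontology : Type where
  tbox : TBox
  abox : BagABox

/-- `I` is a bag model of the ontology `K`. -/
def BagInterp.IsModel (I : BagInterp) (K : Ontology) : Prop :=
  (∀ ax ∈ K.tbox, I.SatisfiesAx ax) ∧
  ∀ s : Assertion, BagABox.mult K.abox s ≤ I.assertMult s

/-- Satisfiability of an ontology under bag semantics. -/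
def Ontology.Satisfiable (K : Ontology) : Prop := ∃ I : BagInterp, I.IsModel K

/- ## Conjunctive queries -/

/-- Terms: variables or individuals. -/
inductive Term where
  | var : Var → Term
  | ind : Ind → Term
  deriving DecidableEq

def Term.varsOf : Term → List Var
  | Term.var v => [v]
  | Term.ind _ => []

def Term.indsOf : Term → List Ind
  | Term.var _ => []
  | Term.ind a => [a]

/-- Query atoms: concept atoms, role atoms, and equalities. -/
inductive QAtom where
  | conceptAt : AtomicConcept → Term → QAtom
  | roleAt : AtomicRole → Term → Term → QAtom
  | eqAt : Var → Term → QAtom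
  deriving DecidableEq

def QAtom.terms : QAtom → List Term
  | QAtom.conceptAt _ t => [t]
  | QAtom.roleAt _ t₁ t₂ => [t₁, t₂]
  | QAtom.eqAt z t => [Term.var z, t]

def QAtom.vars : QAtom → List Var
  | QAtom.conceptAt _ t => t.varsOf
  | QAtom.roleAt _ t₁ t₂ => t₁.varsOf ++ t₂.varsOf
  | QAtom.eqAt z t => z :: t.varsOf

/-- A conjunctive query `q(x) = ∃y. φ(x,y)`: a tuple of answer variables,
a tuple of existential variables, and a conjunction (list, i.e. allowing
repetitions) of atoms. -/
structure CQ : Type where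
  answerVars : List Var
  existVars : List Var
  atoms : List QAtom

def CQ.vars (q : CQ) : List Var := q.answerVars ++ q.existVars

/-- Value of a term under a valuation of the variables. -/
def termVal (I : BagInterp) (f : Var → I.Δ) : Term → I.Δ
  | Term.var v => f v
  | Term.ind a => I.indMap a

/-- Multiplicity contributed by an atom under a valuation: for predicate atoms the
multiplicity of the image tuple, for equalities the indicator of satisfaction. -/
def QAtom.mult (I : BagInterp) (f : Var → I.Δ) : QAtom → ℕ∞
  | QAtom.conceptAt A t => I.cI A (termVal I f t)
  | QAtom.roleAt P t₁ t₂ => I.rI P (termVal I f t₁) (termVal I f t₂)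
  | QAtom.eqAt z t => if f z = termVal I f t then 1 else 0

/-- The bag answers `q^I(ā)`: the sum, over all valuations of the variables of `q`
mapping the answer variables to `ā` (valuations are normalized to a fixed junk
value outside the variables of `q`), of the product of the multiplicities of the
atom occurrences of `q`. -/
def CQ.bagAnswer (q : CQ) (I : BagInterp) (a : List Ind) : ℕ∞ :=
  bagSum (fun f : {f : Var → I.Δ //
      (∀ v, v ∉ q.vars → f v = I.indMap 0) ∧
      q.answerVars.map f = a.map I.indMap} =>
    (q.atoms.map (QAtom.mult I f.1)).prod)

/-- Bag certain answers: pointwise minimum over all bag models. -/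
def bagCertain (K : Ontology) (q : CQ) (a : List Ind) : ℕ∞ :=
  ⨅ (I : BagInterp) (_ : I.IsModel K), q.bagAnswer I a

/-- Base relation of the equivalence relation generated by the equality atoms. -/
def CQ.eqBase (q : CQ) : Term → Term → Prop := fun t₁ t₂ =>
  ∃ z t, QAtom.eqAt z t ∈ q.atoms ∧ t₁ = Term.var z ∧ t₂ = t

/-- Equivalence of terms generated by the equality atoms of `q`. -/
def CQ.eqRel (q : CQ) : Term → Term → Prop := Relation.EqvGen q.eqBase

/-- Safety: the class of every variable contains a term occurring in a
non-equality atom. -/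
def CQ.Safe (q : CQ) : Prop :=
  ∀ v ∈ q.vars, ∃ t : Term, ∃ atm ∈ q.atoms,
    (∀ z s, atm ≠ QAtom.eqAt z s) ∧ t ∈ QAtom.terms atm ∧ q.eqRel (Term.var v) t

/-- Well-formedness of CQs: repetition-free disjoint tuples of variables, all
variables of the atoms among the declared variables, and safety. -/
def CQ.WellFormed (q : CQ) : Prop :=
  q.answerVars.Nodup ∧ q.existVars.Nodup ∧
  (∀ v ∈ q.answerVars, v ∉ q.existVars) ∧
  (∀ atm ∈ q.atoms, ∀ v ∈ QAtom.vars atm, v ∈ q.vars) ∧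
  q.Safe

def CQ.mentionsTerm (q : CQ) (t : Term) : Prop := ∃ atm ∈ q.atoms, t ∈ QAtom.terms atm

/-- Adjacency in the Gaifman graph of `q` (on terms; equality atoms merge the
classes of their two terms, which for connectivity purposes is the same as
making them adjacent). -/
def CQ.gaifmanAdj (q : CQ) : Term → Term → Prop := fun t₁ t₂ =>
  ∃ atm ∈ q.atoms, t₁ ∈ QAtom.terms atm ∧ t₂ ∈ QAtom.terms atm

/-- A CQ is rooted if every connected component of its Gaifman graph contains
an answer variable or an individual. -/
def CQ.Rooted (q : CQ) : Prop :=
  ∀ t : Term, q.mentionsTerm t →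
    ∃ t' : Term, Relation.ReflTransGen q.gaifmanAdj t t' ∧
      ((∃ v ∈ q.answerVars, t' = Term.var v) ∨ ∃ a : Ind, t' = Term.ind a)

/- ## Set semantics -/

/-- A classical (set) interpretation. -/
structure SetInterp : Type 1 where
  Δ : Type
  dne : Nonempty Δ
  indMap : Ind → Δ
  indInj : Function.Injective indMap
  cI : AtomicConcept → Set Δ
  rI : AtomicRole → Set (Δ × Δ)

def SetInterp.roleSet (I : SetInterp) : Role → Set (I.Δ × I.Δ)
  | Role.atomic P => I.rI P
  | Role.inv P => {p | (p.2, p.1) ∈ I.rI P}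

def SetInterp.conceptSet (I : SetInterp) : DLConcept → Set I.Δ
  | DLConcept.atomic A => I.cI A
  | DLConcept.ex R => {u | ∃ v, (u, v) ∈ I.roleSet R}

def SetInterp.SatisfiesAx (I : SetInterp) : TBoxAxiom → Prop
  | TBoxAxiom.cIncl C D => I.conceptSet C ⊆ I.conceptSet D
  | TBoxAxiom.rIncl R S => I.roleSet R ⊆ I.roleSet S
  | TBoxAxiom.cDisj C D => I.conceptSet C ∩ I.conceptSet D = ∅
  | TBoxAxiom.rDisj R S => I.roleSet R ∩ I.roleSet S = ∅

def SetInterp.SatisfiesAssertion (I : SetInterp) : Assertion → Prop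
  | Assertion.conceptA A a => I.indMap a ∈ I.cI A
  | Assertion.roleA P a b => (I.indMap a, I.indMap b) ∈ I.rI P

/-- `I` is a (set) model of the TBox `T` and the set ABox `A`. -/
def SetInterp.IsModelOf (I : SetInterp) (T : TBox) (A : Finset Assertion) : Prop :=
  (∀ ax ∈ T, I.SatisfiesAx ax) ∧ ∀ s ∈ A, I.SatisfiesAssertion s

def setTermVal (I : SetInterp) (f : Var → I.Δ) : Term → I.Δ
  | Term.var v => f v
  | Term.ind a => I.indMap a

def SetInterp.SatAtom (I : SetInterp) (f : Var → I.Δ) : QAtom → Prop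
  | QAtom.conceptAt A t => setTermVal I f t ∈ I.cI A
  | QAtom.roleAt P t₁ t₂ => (setTermVal I f t₁, setTermVal I f t₂) ∈ I.rI P
  | QAtom.eqAt z t => f z = setTermVal I f t

/-- `q(ā)` holds in the set interpretation `I`. -/
def SetInterp.SatCQ (I : SetInterp) (q : CQ) (a : List Ind) : Prop :=
  ∃ f : Var → I.Δ, q.answerVars.map f = a.map I.indMap ∧ ∀ atm ∈ q.atoms, I.SatAtom f atm

/-- Entailment of a concept inclusion from a TBox (standard set semantics). -/
def TBox.EntailsCI (T : TBox) (C D : DLConcept) : Prop :=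
  ∀ I : SetInterp, (∀ ax ∈ T, I.SatisfiesAx ax) → I.conceptSet C ⊆ I.conceptSet D

/- ## The canonical bag model -/

/-- Domain elements of the canonical model: individuals and anonymous elements
`w^j_{u,R}`. -/
inductive CanElem where
  | ind : Ind → CanElem
  | anon : CanElem → Role → ℕ → CanElem
  deriving DecidableEq

def CanElem.isAnon : CanElem → Prop
  | CanElem.ind _ => False
  | CanElem.anon _ _ _ => True

/-- A stage of the canonical-model construction: a set of active elements and
bag interpretations of the predicates. -/
structure PreInterp : Type where
  active : Set CanElem
  c : AtomicConcept → CanElem → ℕ∞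
  r : AtomicRole → CanElem → CanElem → ℕ∞

def PreInterp.toInterp (P : PreInterp) : BagInterp where
  Δ := CanElem
  dne := ⟨CanElem.ind 0⟩
  indMap := CanElem.ind
  indInj := fun a b h => by cases h; rfl
  cI := P.c
  rI := P.r

/-- Concept closure: `ccl(u,I,T)(C)` is the supremum of `C₀^I(u)` over all
concepts `C₀` with `T ⊨ C₀ ⊑ C`. -/
def cclI (T : TBox) (I : BagInterp) (C : DLConcept) (u : I.Δ) : ℕ∞ :=
  ⨆ C₀ : {C₀ : DLConcept // TBox.EntailsCI T C₀ C}, I.conceptMult C₀.1 u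

def PreInterp.ccl (P : PreInterp) (T : TBox) (u : CanElem) (C : DLConcept) : ℕ∞ :=
  cclI T P.toInterp C u

/-- `δ = ccl(u,C_{i-1},T)(∃R) − (∃R)^{C_{i-1}}(u)` (truncated subtraction). -/
def PreInterp.delta (P : PreInterp) (T : TBox) (u : CanElem) (R : Role) : ℕ∞ :=
  P.ccl T u (DLConcept.ex R) - P.toInterp.conceptMult (DLConcept.ex R) u

/-- The anonymous elements freshly added when stepping from `P`. -/
def PreInterp.NewAnon (P : PreInterp) (T : TBox) (w : CanElem) : Prop :=
  ∃ u R j, w = CanElem.anon u R j ∧ u ∈ P.active ∧ (j : ℕ∞) < P.delta T u R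

/-- One step of the canonical-model construction. -/
def PreInterp.step (P : PreInterp) (T : TBox) : PreInterp where
  active := P.active ∪ {w | P.NewAnon T w}
  c := fun A u => if u ∈ P.active then P.ccl T u (DLConcept.atomic A) else 0
  r := fun P₀ u v =>
    if u ∈ P.active ∧ v ∈ P.active then P.r P₀ u v
    else if ∃ j, v = CanElem.anon u (Role.atomic P₀) j ∧ P.NewAnon T v then 1
    else if ∃ j, u = CanElem.anon v (Role.inv P₀) j ∧ P.NewAnon T u then 1
    else 0

/-- The stages `C_i(K)` of the canonical bag model. -/
def canStage (K : Ontology) : ℕ → PreInterp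
  | 0 =>
    { active := Set.range CanElem.ind
      c := fun A u =>
        match u with
        | CanElem.ind a => BagABox.mult K.abox (Assertion.conceptA A a)
        | _ => 0
      r := fun P u v =>
        match u, v with
        | CanElem.ind a, CanElem.ind b => BagABox.mult K.abox (Assertion.roleA P a b)
        | _, _ => 0 }
  | (i + 1) => (canStage K i).step K.tbox

/-- The canonical bag model `C(K) = ⋃_{i ≥ 0} C_i(K)` (pointwise maximum). -/
def canInterp (K : Ontology) : BagInterp where
  Δ := CanElem
  dne := ⟨CanElem.ind 0⟩
  indMap := CanElem.ind
  indInj := fun a b h => by cases h; rfl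
  cI := fun A u => ⨆ i, (canStage K i).c A u
  rI := fun P u v => ⨆ i, (canStage K i).r P u v

/-- The canonical bag model `C(⟨∅,A⟩)` of the ontology with empty TBox:
individuals as domain, every predicate interpreted by its ABox bag. -/
def emptyCanInterp (A : BagABox) : BagInterp where
  Δ := Ind
  dne := ⟨0⟩
  indMap := id
  indInj := fun _ _ h => h
  cI := fun C a => BagABox.mult A (Assertion.conceptA C a)
  rI := fun P a b => BagABox.mult A (Assertion.roleA P a b)

/-- `[q,z]^{C(K)}`: bag answers over the canonical model computed only over
valuations sending the variables of `z` to anonymous elements and the remaining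
existential variables to individuals. -/
def CQ.restrictedAnswer (q : CQ) (K : Ontology) (z : Finset Var) (a : List Ind) : ℕ∞ :=
  bagSum (fun f : {f : Var → CanElem //
      (∀ v, v ∉ q.vars → f v = CanElem.ind 0) ∧
      q.answerVars.map f = a.map CanElem.ind ∧
      ∀ v ∈ q.existVars, (v ∈ z → CanElem.isAnon (f v)) ∧ (v ∉ z → ∃ b : Ind, f v = CanElem.ind b)} =>
    (q.atoms.map (QAtom.mult (canInterp K) f.1)).prod)

/- ## Ma-connected subsets, realisability, and the per-`z` rewritten query -/

/-- `t` is a variable belonging to `z`. -/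
def Term.IsZVar (t : Term) (z : Finset Var) : Prop := ∃ v ∈ z, t = Term.var v

/-- Adjacency in the Gaifman graph restricted to nodes that are variables of `z`. -/
def CQ.zAdj (q : CQ) (z : Finset Var) : Term → Term → Prop := fun t₁ t₂ =>
  q.gaifmanAdj t₁ t₂ ∧ t₁.IsZVar z ∧ t₂.IsZVar z

/-- `z'` is maximally connected in the anonymous part (ma-connected) within `z`. -/
def CQ.MAConnected (q : CQ) (z z' : Finset Var) : Prop :=
  z' ⊆ z ∧
  (∀ v ∈ z', ∀ w ∈ z, Relation.ReflTransGen (q.zAdj z) (Term.var v) (Term.var w) → w ∈ z') ∧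
  (∀ v ∈ z', ∀ w ∈ z', Relation.ReflTransGen (q.zAdj z) (Term.var v) (Term.var w))

/-- `φ_{z'}`: the subconjunction of all atoms of `q` mentioning a variable of `z'`. -/
def CQ.subAtoms (q : CQ) (z' : Finset Var) : List QAtom :=
  q.atoms.filter (fun atm => decide (∃ v ∈ z', v ∈ QAtom.vars atm))

def termsOfList (l : List QAtom) : List Term :=
  l.foldr (fun atm acc => QAtom.terms atm ++ acc) []

/-- `t_{z'}`: all terms occurring in `φ_{z'}` that are not variables of `z`. -/
def CQ.tTerms (q : CQ) (z z' : Finset Var) : List Term :=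
  (termsOfList (q.subAtoms z')).filter (fun t => decide (¬ t.IsZVar z))

/-- `atm` is a legitimate choice of `α_{z'}`: an atom of `φ_{z'}` of the form
`P(t,z)` or `P(z,t)` with `z ∈ z'` and the term `t` not a variable of `z`. -/
def IsAlphaFor (q : CQ) (z z' : Finset Var) (atm : QAtom) : Prop :=
  atm ∈ q.subAtoms z' ∧
  ((∃ P t v, v ∈ z' ∧ ¬ Term.IsZVar t z ∧ atm = QAtom.roleAt P t (Term.var v)) ∨
   (∃ P t v, v ∈ z' ∧ ¬ Term.IsZVar t z ∧ atm = QAtom.roleAt P (Term.var v) t))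

def CQ.inds (q : CQ) : List Ind :=
  (termsOfList q.atoms).foldr (fun t acc => t.indsOf ++ acc) []

def CQ.maxInd (q : CQ) : Ind := q.inds.foldr max 0

/-- The individual `a` of `q^a_{z'}`: the individual among `t_{z'}` if one
exists, and a fresh individual otherwise. -/
def freshA (q : CQ) (z z' : Finset Var) : Ind :=
  if h : ∃ c : Ind, Term.ind c ∈ q.tTerms z z' then h.choose else q.maxInd + 1

/-- A fresh individual `b` (distinct from `freshA`). -/
def freshB (q : CQ) : Ind := q.maxInd + 2

/-- The one-assertion bag ABox `A'` used to test realisability: `{P(a,b)}` if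
`α_{z'} = P(t,z)` and `{P(b,a)}` if `α_{z'} = P(z,t)`. -/
def alphaABox (z' : Finset Var) (atm : QAtom) (a b : Ind) : BagABox :=
  match atm with
  | QAtom.roleAt P _ t₂ =>
      if Term.IsZVar t₂ z' then {Assertion.roleA P a b} else {Assertion.roleA P b a}
  | _ => 0

def subVars (q : CQ) (z' : Finset Var) : List Var :=
  (q.subAtoms z').foldr (fun atm acc => QAtom.vars atm ++ acc) []

/-- The bag answer `(q^a_{z'})^{C(⟨T,A'⟩)}(⟨⟩)` of the Boolean query
`q^a_{z'}() = ∃x'.∃z'. φ_{z'} ∧ ⋀_{t ∈ t_{z'}}(t = a) ∧ ⋀_{z ∈ z'}(z ≠ a)`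
over the canonical model of `⟨T,A'⟩`. -/
def realQAnswer (T : TBox) (q : CQ) (z z' : Finset Var) (atm : QAtom) : ℕ∞ :=
  bagSum (fun f : {f : Var → CanElem //
      (∀ v, v ∉ subVars q z' → f v = CanElem.ind 0) ∧
      (∀ t ∈ q.tTerms z z',
        termVal (canInterp ⟨T, alphaABox z' atm (freshA q z z') (freshB q)⟩) f t
          = CanElem.ind (freshA q z z')) ∧
      ∀ v ∈ z', f v ≠ CanElem.ind (freshA q z z')} =>
    ((q.subAtoms z').map
      (QAtom.mult (canInterp ⟨T, alphaABox z' atm (freshA q z z') (freshB q)⟩) f.1)).prod)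

/-- Equality-consistency of `z`: no equality atom `z = t` with `z ∈ z` and `t ∉ z`. -/
def EqConsistent (q : CQ) (z : Finset Var) : Prop :=
  ∀ v t, QAtom.eqAt v t ∈ q.atoms → v ∈ z → Term.IsZVar t z

/-- The ma-connected subset `z'` is realisable by `T` (w.r.t. the chosen `α_{z'}`). -/
def RealisableMA (T : TBox) (q : CQ) (z z' : Finset Var) (atm : QAtom) : Prop :=
  1 ≤ realQAnswer T q z z' atm

/-- `z` is realisable by `T`: equality-consistent and every nonempty
ma-connected subset of `z` is realisable. -/
def RealisableZ (T : TBox) (q : CQ) (z : Finset Var) (alpha : Finset Var → QAtom) : Prop :=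
  EqConsistent q z ∧
  ∀ z' : Finset Var, q.MAConnected z z' → z'.Nonempty → RealisableMA T q z z' (alpha z')

/-- The nonempty ma-connected subsets of `z`. -/
def maSets (q : CQ) (z : Finset Var) : Finset (Finset Var) :=
  z.powerset.filter (fun z' => q.MAConnected z z' ∧ z'.Nonempty)

def tTermVars (q : CQ) (z z' : Finset Var) : List Var :=
  (q.tTerms z z').foldr (fun t acc => Term.varsOf t ++ acc) []

/-- The equalities identifying all the terms of `t_{z'}`. -/
def eqAtomsFor (q : CQ) (z z' : Finset Var) : List QAtom :=
  (tTermVars q z z').foldr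
    (fun v acc => ((q.tTerms z z').map (fun t => QAtom.eqAt v t)) ++ acc) []

/-- Atoms of `q_z`: the atoms of `q` not mentioning a variable of `z`, plus,
for each nonempty ma-connected `z' ⊆ z`, the atom `α_{z'}` together with the
equalities identifying the terms of `t_{z'}`. -/
def qzAtoms (q : CQ) (z : Finset Var) (alpha : Finset Var → QAtom) : List QAtom :=
  q.atoms.filter (fun atm => decide (¬ ∃ v ∈ z, v ∈ QAtom.vars atm))
    ++ (maSets q z).toList.foldr (fun z' acc => alpha z' :: (eqAtomsFor q z z' ++ acc)) []

/-- The CQ `q_z(x) = ∃y'. φ_z(x,y')`. -/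
def qz (q : CQ) (z : Finset Var) (alpha : Finset Var → QAtom) : CQ where
  answerVars := q.answerVars
  existVars := q.existVars.filter (fun v => decide (∃ atm ∈ qzAtoms q z alpha, v ∈ QAtom.vars atm))
  atoms := qzAtoms q z alpha

/- ## The BALG rewriting `q̄` -/

/-- Value of an atom of `q_z` after the rewriting step 3 (`chasing back'' with
the TBox): concept atoms `A(t)` become `⋁_{T ⊨ C ⊑ A} ζ_C(t)`, role atoms with a
`z`-variable become the corresponding truncated difference, and the remaining
atoms are evaluated as before. -/
def rewAtomVal (T : TBox) (I : BagInterp) (z : Finset Var) (f : Var → I.Δ) : QAtom → ℕ∞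
  | QAtom.conceptAt A t => cclI T I (DLConcept.atomic A) (termVal I f t)
  | QAtom.roleAt P t₁ t₂ =>
      if Term.IsZVar t₂ z then
        cclI T I (DLConcept.ex (Role.atomic P)) (termVal I f t₁)
          - I.conceptMult (DLConcept.ex (Role.atomic P)) (termVal I f t₁)
      else if Term.IsZVar t₁ z then
        cclI T I (DLConcept.ex (Role.inv P)) (termVal I f t₂)
          - I.conceptMult (DLConcept.ex (Role.inv P)) (termVal I f t₂)
      else I.rI P (termVal I f t₁) (termVal I f t₂)
  | QAtom.eqAt v t => if f v = termVal I f t then 1 else 0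

/-- Bag answers of the BALG query `q̄_z`, obtained from `q_z` by projecting only
the variables of `y' ∖ z` and replacing atoms as in `rewAtomVal`. -/
def rewAnswer (T : TBox) (qq : CQ) (z : Finset Var) (I : BagInterp) (a : List Ind) : ℕ∞ :=
  bagSum (fun f : {f : Var → I.Δ //
      (∀ v, v ∉ qq.answerVars ++ qq.existVars.filter (fun u => decide (u ∉ z)) →
        f v = I.indMap 0) ∧
      qq.answerVars.map f = a.map I.indMap} =>
    (qq.atoms.map (rewAtomVal T I z f.1)).prod)

/- ## BALG¹_ε queries -/

def Term.fvars (t : Term) : Finset Var :=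
  match t with
  | Term.var v => {v}
  | Term.ind _ => ∅

/-- Syntax of BALG¹_ε queries. -/
inductive BQuery where
  | atomC : AtomicConcept → Term → BQuery
  | atomR : AtomicRole → Term → Term → BQuery
  | conj : BQuery → BQuery → BQuery
  | eqSel : BQuery → Var → Term → BQuery
  | proj : List Var → BQuery → BQuery
  | maxU : BQuery → BQuery → BQuery
  | arithU : BQuery → BQuery → BQuery
  | diff : BQuery → BQuery → BQuery

/-- Answer variables of a BALG¹_ε query. -/
def BQuery.fv : BQuery → Finset Var
  | BQuery.atomC _ t => t.fvars
  | BQuery.atomR _ t₁ t₂ => t₁.fvars ∪ t₂.fvars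
  | BQuery.conj q₁ q₂ => q₁.fv ∪ q₂.fv
  | BQuery.eqSel q _ t => q.fv ∪ t.fvars
  | BQuery.proj ys q => q.fv \ ys.toFinset
  | BQuery.maxU q₁ _ => q₁.fv
  | BQuery.arithU q₁ _ => q₁.fv
  | BQuery.diff q₁ _ => q₁.fv

/-- Well-formedness of BALG¹_ε queries. -/
def BQuery.WF : BQuery → Prop
  | BQuery.atomC _ _ => True
  | BQuery.atomR _ _ _ => True
  | BQuery.conj q₁ q₂ => q₁.WF ∧ q₂.WF
  | BQuery.eqSel q x _ => q.WF ∧ x ∈ q.fv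
  | BQuery.proj _ q => q.WF
  | BQuery.maxU q₁ q₂ => q₁.WF ∧ q₂.WF ∧ q₁.fv = q₂.fv
  | BQuery.arithU q₁ q₂ => q₁.WF ∧ q₂.WF ∧ q₁.fv = q₂.fv
  | BQuery.diff q₁ q₂ => q₁.WF ∧ q₂.WF ∧ q₁.fv = q₂.fv

/-- Semantics of BALG¹_ε queries under a valuation of the answer variables. -/
def BQuery.val (I : BagInterp) : BQuery → (Var → I.Δ) → ℕ∞
  | BQuery.atomC A t, f => I.cI A (termVal I f t)
  | BQuery.atomR P t₁ t₂, f => I.rI P (termVal I f t₁) (termVal I f t₂)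
  | BQuery.conj q₁ q₂, f => q₁.val I f * q₂.val I f
  | BQuery.eqSel q x t, f => if f x = termVal I f t then q.val I f else 0
  | BQuery.proj ys q, f => bagSum (fun g : {g : Var → I.Δ // ∀ v, v ∉ ys → g v = f v} => q.val I g.1)
  | BQuery.maxU q₁ q₂, f => max (q₁.val I f) (q₂.val I f)
  | BQuery.arithU q₁ q₂, f => q₁.val I f + q₂.val I f
  | BQuery.diff q₁ q₂, f => q₁.val I f - q₂.val I f

/-- Bag answers of a BALG¹_ε query with answer variables `xs` on a tuple `a`. -/
def BQuery.answer (Q : BQuery) (xs : List Var) (I : BagInterp) (a : List Ind) : ℕ∞ :=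
  if a.length = xs.length then Q.val I (fun v => I.indMap (a.getD (xs.idxOf v) 0)) else 0

/- ## Enumerated bags, e-homomorphisms, and e-valuations -/

/-- Enumerated copies of a bag of domain elements (for an atomic concept). -/
def EBagC (I : BagInterp) (A : AtomicConcept) : Type :=
  {p : I.Δ × ℕ // 1 ≤ p.2 ∧ (p.2 : ℕ∞) ≤ I.cI A p.1}

/-- Enumerated copies of a bag of pairs (for an atomic role). -/
def EBagR (I : BagInterp) (P : AtomicRole) : Type :=
  {p : (I.Δ × I.Δ) × ℕ // 1 ≤ p.2 ∧ (p.2 : ℕ∞) ≤ I.rI P p.1.1 p.1.2}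

/-- An e-homomorphism between the enumerated versions of two bag interpretations. -/
structure EHom (I J : BagInterp) where
  h : I.Δ → J.Δ
  hInd : ∀ a : Ind, h (I.indMap a) = J.indMap a
  hC : ∀ A : AtomicConcept, EBagC I A → EBagC J A
  hC_fst : ∀ (A : AtomicConcept) (x : EBagC I A), (hC A x).1.1 = h x.1.1
  hR : ∀ P : AtomicRole, EBagR I P → EBagR J P
  hR_fst : ∀ (P : AtomicRole) (x : EBagR I P), (hR P x).1.1 = (h x.1.1.1, h x.1.1.2)

/-- Predicate-injectivity on individuals of an e-homomorphism. -/
def EHom.PredInj {I J : BagInterp} (e : EHom I J) : Prop :=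
  ∀ u : I.Δ, (∃ a : Ind, e.h u = J.indMap a) →
    (∀ A : AtomicConcept, ∀ x y : EBagC I A,
      x.1.1 = u → y.1.1 = u → x.1.2 ≠ y.1.2 → e.hC A x ≠ e.hC A y) ∧
    (∀ P : AtomicRole, ∀ x y : EBagR I P, x.1.1.1 = u → y.1.1.1 = u →
      (x.1.1.2, x.1.2) ≠ (y.1.1.2, y.1.2) → e.hR P x ≠ e.hR P y) ∧
    (∀ P : AtomicRole, ∀ x y : EBagR I P, x.1.1.2 = u → y.1.1.2 = u →
      (x.1.1.1, x.1.2) ≠ (y.1.1.1, y.1.2) → e.hR P x ≠ e.hR P y)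

/-- Enumerated atoms of a CQ (seen as a bag of atoms). -/
def EAtom (q : CQ) : Type := {p : QAtom × ℕ // 1 ≤ p.2 ∧ p.2 ≤ q.atoms.count p.1}

/-- An e-valuation of the enumerated query `q^e` over the enumerated
interpretation `I^e`. -/
structure EVal (q : CQ) (I : BagInterp) where
  ν : Var → I.Δ
  hjunk : ∀ v, v ∉ q.vars → ν v = I.indMap 0
  heq : ∀ z t, QAtom.eqAt z t ∈ q.atoms → ν z = termVal I ν t
  ℓ : EAtom q → ℕ
  hone : ∀ e : EAtom q, 1 ≤ ℓ e
  hconcept : ∀ (e : EAtom q) (A : AtomicConcept) (t : Term),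
    e.1.1 = QAtom.conceptAt A t → (ℓ e : ℕ∞) ≤ I.cI A (termVal I ν t)
  hrole : ∀ (e : EAtom q) (P : AtomicRole) (t₁ t₂ : Term),
    e.1.1 = QAtom.roleAt P t₁ t₂ → (ℓ e : ℕ∞) ≤ I.rI P (termVal I ν t₁) (termVal I ν t₂)
  heqm : ∀ (e : EAtom q) (z : Var) (t : Term), e.1.1 = QAtom.eqAt z t → ℓ e = 1

/-- The tuple of domain elements to which an e-atom is sent by an e-valuation. -/
def EVal.imgTerms {q : CQ} {I : BagInterp} (ev : EVal q I) (e : EAtom q) : List I.Δ :=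
  (QAtom.terms e.1.1).map (termVal I ev.ν)

/-- The enumerated image of an e-atom under an e-valuation. -/
def EVal.img {q : CQ} {I : BagInterp} (ev : EVal q I) (e : EAtom q) : List I.Δ × ℕ :=
  (ev.imgTerms e, ev.ℓ e)

/- ## Auxiliary concrete queries -/

/-- The CQ `ζ_C(x)`: `A(x)`, `∃y.P(x,y)` or `∃y.P(y,x)`. -/
def zetaCQ : DLConcept → CQ
  | DLConcept.atomic A => ⟨[0], [], [QAtom.conceptAt A (Term.var 0)]⟩
  | DLConcept.ex (Role.atomic P) => ⟨[0], [1], [QAtom.roleAt P (Term.var 0) (Term.var 1)]⟩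
  | DLConcept.ex (Role.inv P) => ⟨[0], [1], [QAtom.roleAt P (Term.var 1) (Term.var 0)]⟩

/-- The CQ `q(x) = R(x,x)`. -/
def selfCQ (P : AtomicRole) : CQ := ⟨[0], [], [QAtom.roleAt P (Term.var 0) (Term.var 0)]⟩

/-!
A construction step only ever adds role edges that touch a freshly created anonymous element, and
keeps the multiplicities between already active elements. Individuals are active from stage 0 on,
so between individuals every stage, and hence `C(K)`, carries exactly the ABox multiplicities. The
query `R(x,x)` has a single valuation sending `x` to `a`, so its answer is the multiplicity of
`R(a,a)`.
-/

theorem PreInterp.active_subset_step (I : PreInterp) (T : TBox) : I.active ⊆ (I.step T).active :=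
  Set.subset_union_left

theorem PreInterp.step_r_of_mem_active {I : PreInterp} (T : TBox) (P : AtomicRole)
    {u v : CanElem} (hu : u ∈ I.active) (hv : v ∈ I.active) :
    (I.step T).r P u v = I.r P u v :=
  if_pos ⟨hu, hv⟩

theorem canStage_ind_mem_active (K : Ontology) (a : Ind) :
    ∀ i, CanElem.ind a ∈ (canStage K i).active
  | 0 => ⟨a, rfl⟩
  | i + 1 => PreInterp.active_subset_step _ _ (canStage_ind_mem_active K a i)

theorem canStage_r_ind (K : Ontology) (P : AtomicRole) (a b : Ind) :
    ∀ i, (canStage K i).r P (CanElem.ind a) (CanElem.ind b)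
      = BagABox.mult K.abox (Assertion.roleA P a b)
  | 0 => rfl
  | i + 1 => by
    rw [canStage, PreInterp.step_r_of_mem_active _ _ (canStage_ind_mem_active K a i)
      (canStage_ind_mem_active K b i)]
    exact canStage_r_ind K P a b i

theorem canInterp_rI_ind (K : Ontology) (P : AtomicRole) (a b : Ind) :
    (canInterp K).rI P (CanElem.ind a) (CanElem.ind b)
      = BagABox.mult K.abox (Assertion.roleA P a b) :=
  (iSup_congr (canStage_r_ind K P a b)).trans iSup_const

theorem bagSum_unique {α : Type*} [Unique α] (f : α → ℕ∞) : bagSum f = f default :=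
  le_antisymm
    (iSup_le fun s => (Finset.sum_le_sum_of_subset s.subset_univ).trans_eq (Fintype.sum_unique f))
    (le_iSup_of_le {default} (Finset.sum_singleton f default).ge)

theorem CQ.bagAnswer_of_answerVars_eq_singleton (q : CQ) (I : BagInterp) {x : Var}
    (hx : q.answerVars = [x]) (hy : q.existVars = []) (a : Ind) :
    q.bagAnswer I [a]
      = (q.atoms.map (QAtom.mult I (Function.update (fun _ => I.indMap 0) x (I.indMap a)))).prod := by
  set g := Function.update (fun _ => I.indMap 0) x (I.indMap a)
  have hval : (fun f : Var → I.Δ => (∀ v, v ∉ q.vars → f v = I.indMap 0) ∧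
      q.answerVars.map f = [a].map I.indMap) = (· = g) := by
    funext f
    simp only [CQ.vars, hx, hy, List.append_nil, List.mem_singleton, List.map_cons, List.map_nil,
      List.cons.injEq, and_true, eq_iff_iff]
    refine ⟨fun ⟨hjunk, hfx⟩ => funext fun v => ?_, ?_⟩
    · by_cases hv : v = x
      · simp [g, hv, hfx]
      · simp [g, hv, hjunk v hv]
    · rintro rfl
      exact ⟨fun v hv => Function.update_of_ne hv _ _, Function.update_self _ _ _⟩
  unfold CQ.bagAnswer
  rw [hval, bagSum_unique]
  rfl

theorem selfCQ_bagAnswer (I : BagInterp) (P : AtomicRole) (a : Ind) :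
    (selfCQ P).bagAnswer I [a] = I.rI P (I.indMap a) (I.indMap a) := by
  rw [CQ.bagAnswer_of_answerVars_eq_singleton _ _ rfl rfl]
  simp [selfCQ, QAtom.mult, termVal]

theorem statement_18_general (K : Ontology)
    (P : AtomicRole) :
    (∀ a b : Ind,
      (canInterp K).rI P (CanElem.ind a) (CanElem.ind b)
          = BagABox.mult K.abox (Assertion.roleA P a b) ∧
      (emptyCanInterp K.abox).rI P a b
          = BagABox.mult K.abox (Assertion.roleA P a b) ∧
      (canInterp K).roleMult (Role.inv P) (CanElem.ind a) (CanElem.ind b)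
          = BagABox.mult K.abox (Assertion.roleA P b a) ∧
      (emptyCanInterp K.abox).roleMult (Role.inv P) a b
          = BagABox.mult K.abox (Assertion.roleA P b a)) ∧
    (∀ a : Ind,
      (selfCQ P).bagAnswer (canInterp K) [a]
        = (selfCQ P).bagAnswer (emptyCanInterp K.abox) [a]) :=
  ⟨fun a b => ⟨canInterp_rI_ind K P a b, rfl, canInterp_rI_ind K P b a, rfl⟩,
    fun a => by rw [selfCQ_bagAnswer, selfCQ_bagAnswer]; exact canInterp_rI_ind K P a a⟩

/-- For a DL-Lite_core^bag ontology `K = ⟨T,A⟩` and an atomic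
role `P`: (i) the multiplicity of every pair of individuals `(a,b)` in `P` (and
in its inverse) under `C(K)` agrees with its multiplicity under `C(⟨∅,A⟩)`,
namely `A(P(a,b))`; and (ii) for the CQ `q(x) = P(x,x)` and every individual
`a`, the bag answer `q^{C(K)}(a)` equals `q^{C(⟨∅,A⟩)}(a)`. -/
theorem statement_18 (K : Ontology) (hcore : TBox.IsCore K.tbox)
    (P : AtomicRole) :
    (∀ a b : Ind,
      (canInterp K).rI P (CanElem.ind a) (CanElem.ind b)
          = BagABox.mult K.abox (Assertion.roleA P a b) ∧
      (emptyCanInterp K.abox).rI P a b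
          = BagABox.mult K.abox (Assertion.roleA P a b) ∧
      (canInterp K).roleMult (Role.inv P) (CanElem.ind a) (CanElem.ind b)
          = BagABox.mult K.abox (Assertion.roleA P b a) ∧
      (emptyCanInterp K.abox).roleMult (Role.inv P) a b
          = BagABox.mult K.abox (Assertion.roleA P b a)) ∧
    (∀ a : Ind,
      (selfCQ P).bagAnswer (canInterp K) [a]
        = (selfCQ P).bagAnswer (emptyCanInterp K.abox) [a]) :=
  statement_18_general K P
end
end

section
/- Let q(x) = ∃y. φ(x,y) be a rooted CQ, K = ⟨T,A⟩ a DL-Lite_core^bag ontology, z an equality-consistent subset of y, and z' a non-empty ma-connected subset of z that is realisable by T. Then (q^a_{z'})^{C(⟨T,A'⟩)}(⟨⟩) = 1, where a and A' are as in the definition of realisability; that is, the Boolean query q^a_{z'} has exactly one contributing valuation over the corresponding one-assertion canonical model. -/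
/-!
Common formalization of the bag semantics of DL-Lite ontologies
(Nikolaou et al., "The Bag Semantics of Ontology-Based Data Access").
-/

open scoped Classical

noncomputable section

/-!
In the canonical model of a single role assertion `P(c,d)` every role, and every inverse role,
is functional and all multiplicities are at most one: an anonymous `R`-successor is created only
for an element that has no `R`-edge yet, and that element never gets a second one. Two valuations
contributing to `q^a_{z'}` send all of `t_{z'}` to `a`; functionality along `α_{z'}` makes them
agree on its `z'`-variable, and then along every atom of the connected part `φ_{z'}`. So at most
one valuation contributes, with weight at most one, while realisability provides one.
-/

section BagSum

variable {α M : Type*}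

lemma sum_le_bagSum (f : α → ℕ∞) (s : Finset α) : ∑ x ∈ s, f x ≤ bagSum f :=
  le_iSup (fun s : Finset α => ∑ x ∈ s, f x) s

lemma le_bagSum (f : α → ℕ∞) (x : α) : f x ≤ bagSum f := by
  simpa using sum_le_bagSum f {x}

lemma Finset.sum_le_of_subsingleton_support [AddCommMonoid M] [PartialOrder M]
    [CanonicallyOrderedAdd M] {s : Finset α} {f : α → M} {c : M}
    (hs : ∀ x ∈ s, ∀ y ∈ s, f x ≠ 0 → f y ≠ 0 → x = y) (hc : ∀ x ∈ s, f x ≤ c) :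
    ∑ x ∈ s, f x ≤ c := by
  by_cases h : ∃ x ∈ s, f x ≠ 0
  · obtain ⟨x, hx, hfx⟩ := h
    rw [Finset.sum_eq_single_of_mem x hx fun y hy hyx =>
      by_contra fun hfy => hyx (hs y hy x hx hfy hfx)]
    exact hc x hx
  · push Not at h
    rw [Finset.sum_eq_zero h]
    exact zero_le

lemma bagSum_le_one {f : α → ℕ∞} (h : ∀ x, f x ≤ 1)
    (hf : ∀ x y, f x ≠ 0 → f y ≠ 0 → x = y) : bagSum f ≤ 1 :=
  iSup_le fun _ => Finset.sum_le_of_subsingleton_support (fun x _ y _ => hf x y) fun x _ => h x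

end BagSum

def Role.flip : Role → Role
  | Role.atomic P => Role.inv P
  | Role.inv P => Role.atomic P

lemma BagInterp.roleMult_flip (I : BagInterp) (R : Role) (u v : I.Δ) :
    I.roleMult R.flip u v = I.roleMult R v u := by
  cases R <;> rfl

lemma BagInterp.roleMult_le_conceptMult (I : BagInterp) (R : Role) (u v : I.Δ) :
    I.roleMult R u v ≤ I.conceptMult (DLConcept.ex R) u :=
  le_bagSum (fun v => I.roleMult R u v) v

lemma cclI_le_one {T : TBox} {I : BagInterp} (h : ∀ C u, I.conceptMult C u ≤ 1)
    (C : DLConcept) (u : I.Δ) : cclI T I C u ≤ 1 :=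
  iSup_le fun C₀ => h C₀.1 u

def BagInterp.RolesFunctional (I : BagInterp) : Prop :=
  ∀ R u v₁ v₂, I.roleMult R u v₁ ≠ 0 → I.roleMult R u v₂ ≠ 0 → v₁ = v₂

lemma CanElem.anon_anon_ne (u : CanElem) (R S : Role) (j k : ℕ) :
    CanElem.anon (CanElem.anon u R j) S k ≠ u := by
  intro h
  have := congrArg sizeOf h
  simp only [CanElem.anon.sizeOf_spec] at this
  omega

namespace PreInterp

variable {S : PreInterp} {T : TBox} {R : Role} {u v : CanElem}

lemma step_roleMult_eq :
    (S.step T).toInterp.roleMult R u v =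
      if u ∈ S.active ∧ v ∈ S.active then S.toInterp.roleMult R u v
      else if ∃ j, v = CanElem.anon u R j ∧ S.NewAnon T v then 1
      else if ∃ j, u = CanElem.anon v R.flip j ∧ S.NewAnon T u then 1
      else 0 := by
  cases R with
  | atomic Q => rfl
  | inv Q =>
    show (if v ∈ S.active ∧ u ∈ S.active then _ else _) = _
    by_cases hB : ∃ j, u = CanElem.anon v (Role.atomic Q) j ∧ S.NewAnon T u <;>
    by_cases hC : ∃ j, v = CanElem.anon u (Role.inv Q) j ∧ S.NewAnon T v <;>
    simp only [and_comm (a := v ∈ S.active), Role.flip, hB, hC, if_true, if_false] <;> rfl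

lemma step_roleMult_of_mem_active (hu : u ∈ S.active) (hv : v ∈ S.active) :
    (S.step T).toInterp.roleMult R u v = S.toInterp.roleMult R u v := by
  rw [step_roleMult_eq, if_pos ⟨hu, hv⟩]

lemma step_roleMult_ne_zero (h : (S.step T).toInterp.roleMult R u v ≠ 0) :
    (u ∈ S.active ∧ v ∈ S.active ∧
      (S.step T).toInterp.roleMult R u v = S.toInterp.roleMult R u v) ∨
    (∃ j, v = CanElem.anon u R j ∧ S.NewAnon T v) ∨
    (∃ j, u = CanElem.anon v R.flip j ∧ S.NewAnon T u) := by
  rw [step_roleMult_eq] at h ⊢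
  split_ifs at h ⊢ with h₁ h₂ h₃
  · exact Or.inl ⟨h₁.1, h₁.2, rfl⟩
  · exact Or.inr (Or.inl h₂)
  · exact Or.inr (Or.inr h₃)
  · exact absurd rfl h

end PreInterp

/-- Invariant of the stages of the canonical model of the ABox `{P₀(c,d)}`. -/
structure SingleEdgeStage (P₀ : AtomicRole) (c d : Ind) (S : PreInterp) : Prop where
  conceptMult_le_one : ∀ C u, S.toInterp.conceptMult C u ≤ 1
  ind_mem_active : ∀ a : Ind, CanElem.ind a ∈ S.active
  edge_shape : ∀ R u v, S.toInterp.roleMult R u v ≠ 0 →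
    (R = Role.atomic P₀ ∧ u = CanElem.ind c ∧ v = CanElem.ind d) ∨
    (R = Role.inv P₀ ∧ u = CanElem.ind d ∧ v = CanElem.ind c) ∨
    v = CanElem.anon u R 0 ∨ u = CanElem.anon v R.flip 0
  parent : ∀ w R j, CanElem.anon w R j ∈ S.active →
    w ∈ S.active ∧ 1 ≤ S.toInterp.roleMult R w (CanElem.anon w R j)
  base : 1 ≤ S.r P₀ (CanElem.ind c) (CanElem.ind d)

namespace SingleEdgeStage

variable {P₀ : AtomicRole} {c d : Ind} {S : PreInterp} {T : TBox} {R : Role} {u v : CanElem}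
  (hS : SingleEdgeStage P₀ c d S)
include hS

lemma roleMult_le_one (R : Role) (u v : CanElem) : S.toInterp.roleMult R u v ≤ 1 :=
  (S.toInterp.roleMult_le_conceptMult R u v).trans (hS.conceptMult_le_one _ u)

lemma one_le_conceptMult_source :
    1 ≤ S.toInterp.conceptMult (DLConcept.ex (Role.atomic P₀)) (CanElem.ind c) :=
  hS.base.trans (S.toInterp.roleMult_le_conceptMult _ _ (CanElem.ind d))

lemma one_le_conceptMult_target :
    1 ≤ S.toInterp.conceptMult (DLConcept.ex (Role.inv P₀)) (CanElem.ind d) :=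
  hS.base.trans (S.toInterp.roleMult_le_conceptMult _ _ (CanElem.ind c))

lemma one_le_conceptMult_of_anon_mem_active {w : CanElem} {j : ℕ}
    (h : CanElem.anon w R.flip j ∈ S.active) :
    1 ≤ S.toInterp.conceptMult (DLConcept.ex R) (CanElem.anon w R.flip j) :=
  ((hS.parent w R.flip j h).2.trans_eq (S.toInterp.roleMult_flip R w _)).trans
    (S.toInterp.roleMult_le_conceptMult _ _ w)

lemma delta_eq_zero (h : 1 ≤ S.toInterp.conceptMult (DLConcept.ex R) u) : S.delta T u R = 0 :=
  tsub_eq_zero_of_le ((cclI_le_one hS.conceptMult_le_one _ _).trans h)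

lemma not_newAnon_of_mem_active (hu : u ∈ S.active) : ¬ S.NewAnon T u := by
  rintro ⟨p, R, j, rfl, -, hlt⟩
  have := (hS.parent p R j hu).2.trans (S.toInterp.roleMult_le_conceptMult _ _ _)
  simp [hS.delta_eq_zero this] at hlt

lemma newAnon_anon {p : CanElem} {j : ℕ} (h : S.NewAnon T (CanElem.anon p R j)) :
    j = 0 ∧ p ∈ S.active ∧ 0 < S.delta T p R := by
  obtain ⟨p, R, j, he, hp, hlt⟩ := h
  cases he
  have hj : (j : ℕ∞) < 1 :=
    hlt.trans_le (tsub_le_self.trans (cclI_le_one hS.conceptMult_le_one _ _))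
  norm_cast at hj
  exact ⟨by omega, hp, zero_le.trans_lt hlt⟩

lemma step_roleMult_le_one (R : Role) (u v : CanElem) :
    (S.step T).toInterp.roleMult R u v ≤ 1 := by
  rw [PreInterp.step_roleMult_eq]
  split_ifs
  exacts [hS.roleMult_le_one R u v, le_rfl, le_rfl, zero_le]

lemma step_roleMult_parent {p : CanElem} {j : ℕ} (h : S.NewAnon T (CanElem.anon p R j)) :
    (S.step T).toInterp.roleMult R p (CanElem.anon p R j) = 1 := by
  rw [PreInterp.step_roleMult_eq, if_neg fun hc => hS.not_newAnon_of_mem_active hc.2 h,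
    if_pos ⟨j, rfl, h⟩]

lemma step_roleMult_ne_zero_of_not_mem_active (hu : u ∈ S.active) (hv : v ∉ S.active)
    (h : (S.step T).toInterp.roleMult R u v ≠ 0) :
    v = CanElem.anon u R 0 ∧ 1 ≤ S.delta T u R := by
  rcases PreInterp.step_roleMult_ne_zero h with ⟨-, hv', -⟩ | ⟨j, rfl, hnew⟩ | ⟨-, -, hnew⟩
  · exact absurd hv' hv
  · obtain ⟨rfl, -, hpos⟩ := hS.newAnon_anon hnew
    exact ⟨rfl, Order.one_le_iff_pos.2 hpos⟩
  · exact absurd hnew (hS.not_newAnon_of_mem_active hu)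

lemma exists_eq_anon_of_step_roleMult_ne_zero (hu : u ∉ S.active)
    (h : (S.step T).toInterp.roleMult R u v ≠ 0) : ∃ j, u = CanElem.anon v R.flip j := by
  rcases PreInterp.step_roleMult_ne_zero h with ⟨hu', -, -⟩ | ⟨j, rfl, hnew⟩ | ⟨j, hj, -⟩
  · exact absurd hu' hu
  · exact absurd (hS.newAnon_anon hnew).2.1 hu
  · exact ⟨j, hj⟩

/-- An active element keeps its old `R`-edges and gains at most `δ = ccl - (∃R)` new ones;
an inactive one has only the edge to its parent. -/
lemma step_conceptMult_ex_le_one (R : Role) (u : CanElem) :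
    (S.step T).toInterp.conceptMult (DLConcept.ex R) u ≤ 1 := by
  refine iSup_le fun s => ?_
  by_cases hu : u ∈ S.active
  · rw [← Finset.sum_filter_add_sum_filter_not s (· ∈ S.active)]
    have hold : ∑ v ∈ s with v ∈ S.active, (S.step T).toInterp.roleMult R u v ≤
        S.toInterp.conceptMult (DLConcept.ex R) u := by
      refine (Finset.sum_congr rfl fun v hv => ?_).trans_le
        (sum_le_bagSum (fun v => S.toInterp.roleMult R u v) _)
      exact PreInterp.step_roleMult_of_mem_active hu (Finset.mem_filter.1 hv).2
    have hnew : ∑ v ∈ s with v ∉ S.active, (S.step T).toInterp.roleMult R u v ≤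
        S.delta T u R := by
      refine Finset.sum_le_of_subsingleton_support (fun x hx y hy hx0 hy0 => ?_) fun x hx => ?_
      · rw [(hS.step_roleMult_ne_zero_of_not_mem_active hu (Finset.mem_filter.1 hx).2 hx0).1,
          (hS.step_roleMult_ne_zero_of_not_mem_active hu (Finset.mem_filter.1 hy).2 hy0).1]
      · by_cases hx0 : (S.step T).toInterp.roleMult R u x = 0
        · rw [hx0]; exact zero_le
        · exact (hS.step_roleMult_le_one R u x).trans
            (hS.step_roleMult_ne_zero_of_not_mem_active hu (Finset.mem_filter.1 hx).2 hx0).2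
    calc _ ≤ S.toInterp.conceptMult (DLConcept.ex R) u + S.delta T u R := add_le_add hold hnew
      _ = max (S.toInterp.conceptMult (DLConcept.ex R) u) (S.ccl T u (DLConcept.ex R)) :=
          add_tsub_eq_max
      _ ≤ 1 := max_le (hS.conceptMult_le_one _ u) (cclI_le_one hS.conceptMult_le_one _ _)
  · refine Finset.sum_le_of_subsingleton_support (fun x _ y _ hx hy => ?_)
      fun x _ => hS.step_roleMult_le_one R u x
    obtain ⟨j, rfl⟩ := hS.exists_eq_anon_of_step_roleMult_ne_zero hu hx
    obtain ⟨k, hk⟩ := hS.exists_eq_anon_of_step_roleMult_ne_zero hu hy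
    exact (CanElem.anon.inj hk).1

lemma step_conceptMult_le_one (C : DLConcept) (u : CanElem) :
    (S.step T).toInterp.conceptMult C u ≤ 1 := by
  cases C with
  | atomic A =>
    show (if u ∈ S.active then S.ccl T u (DLConcept.atomic A) else 0) ≤ 1
    split_ifs
    exacts [cclI_le_one hS.conceptMult_le_one _ _, zero_le]
  | ex R => exact hS.step_conceptMult_ex_le_one R u

lemma step : SingleEdgeStage P₀ c d (S.step T) where
  conceptMult_le_one := hS.step_conceptMult_le_one
  ind_mem_active a := Or.inl (hS.ind_mem_active a)
  edge_shape R u v h := by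
    rcases PreInterp.step_roleMult_ne_zero h with ⟨-, -, hold⟩ | ⟨j, rfl, hnew⟩ | ⟨j, rfl, hnew⟩
    · exact hS.edge_shape R u v (hold ▸ h)
    · obtain ⟨rfl, -⟩ := hS.newAnon_anon hnew
      exact Or.inr (Or.inr (Or.inl rfl))
    · obtain ⟨rfl, -⟩ := hS.newAnon_anon hnew
      exact Or.inr (Or.inr (Or.inr rfl))
  parent w R j hmem := by
    rcases hmem with hold | hnew
    · obtain ⟨hw, hedge⟩ := hS.parent w R j hold
      exact ⟨Or.inl hw, hedge.trans_eq (PreInterp.step_roleMult_of_mem_active hw hold).symm⟩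
    · exact ⟨Or.inl (hS.newAnon_anon hnew).2.1, (hS.step_roleMult_parent hnew).ge⟩
  base := hS.base.trans_eq (PreInterp.step_roleMult_of_mem_active (R := Role.atomic P₀)
    (hS.ind_mem_active c) (hS.ind_mem_active d)).symm

end SingleEdgeStage

lemma canInterp_roleMult (K : Ontology) (R : Role) (u v : CanElem) :
    (canInterp K).roleMult R u v = ⨆ i, (canStage K i).toInterp.roleMult R u v := by
  cases R <;> rfl

section SingletonABox

variable (T : TBox) (P₀ : AtomicRole) (c d : Ind)

local notation "K₁" => Ontology.mk T {Assertion.roleA P₀ c d}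

lemma canStage_zero_r (Q : AtomicRole) (u v : CanElem) :
    (canStage K₁ 0).r Q u v =
      if Q = P₀ ∧ u = CanElem.ind c ∧ v = CanElem.ind d then 1 else 0 := by
  cases u <;> cases v <;> simp [canStage, BagABox.mult, Multiset.count_singleton]

lemma canStage_zero_roleMult (R : Role) (u v : CanElem) :
    (canStage K₁ 0).toInterp.roleMult R u v =
      if (R = Role.atomic P₀ ∧ u = CanElem.ind c ∧ v = CanElem.ind d) ∨
        (R = Role.inv P₀ ∧ u = CanElem.ind d ∧ v = CanElem.ind c) then 1 else 0 := by
  cases R with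
  | atomic Q => simp [BagInterp.roleMult, PreInterp.toInterp, canStage_zero_r]
  | inv Q => simp [BagInterp.roleMult, PreInterp.toInterp, canStage_zero_r, and_comm]

lemma singleEdgeStage_canStage_zero : SingleEdgeStage P₀ c d (canStage K₁ 0) := by
  have hedge : ∀ R (u v : CanElem), (canStage K₁ 0).toInterp.roleMult R u v ≠ 0 →
      (R = Role.atomic P₀ ∧ u = CanElem.ind c ∧ v = CanElem.ind d) ∨
      (R = Role.inv P₀ ∧ u = CanElem.ind d ∧ v = CanElem.ind c) := fun R u v h => by
    rw [canStage_zero_roleMult] at h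
    split_ifs at h with hc
    exacts [hc, absurd rfl h]
  refine ⟨fun C u => ?_, fun a => ⟨a, rfl⟩, fun R u v h => (hedge R u v h).imp_right Or.inl,
    ?_, by simp [canStage_zero_r]⟩
  · cases C with
    | atomic A =>
      cases u <;> simp [BagInterp.conceptMult, PreInterp.toInterp, canStage, BagABox.mult]
    | ex R =>
      refine bagSum_le_one (fun v => (canStage_zero_roleMult T P₀ c d R u v).trans_le ?_)
        fun v w hv hw => ?_
      · split_ifs <;> simp
      · rcases hedge R u v hv with ⟨rfl, -, rfl⟩ | ⟨rfl, -, rfl⟩ <;>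
          rcases hedge _ u w hw with ⟨h, -, rfl⟩ | ⟨h, -, rfl⟩ <;> first | rfl | cases h
  · rintro w R j ⟨a, ha⟩
    cases ha

lemma singleEdgeStage_canStage (i : ℕ) : SingleEdgeStage P₀ c d (canStage K₁ i) := by
  induction i with
  | zero => exact singleEdgeStage_canStage_zero T P₀ c d
  | succ n ih => exact ih.step

lemma canInterp_roleMult_anon_eq_zero {u : CanElem} {R : Role}
    (hu : ∀ i, u ∈ (canStage K₁ i).active →
      1 ≤ (canStage K₁ i).toInterp.conceptMult (DLConcept.ex R) u) (j : ℕ) :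
    (canInterp K₁).roleMult R u (CanElem.anon u R j) = 0 := by
  rw [canInterp_roleMult, ENat.iSup_eq_zero]
  intro i
  induction i with
  | zero => cases R <;> cases u <;> rfl
  | succ n ih =>
    have hS := singleEdgeStage_canStage T P₀ c d n
    by_contra h
    rcases PreInterp.step_roleMult_ne_zero h with ⟨-, -, hold⟩ | ⟨-, -, hnew⟩ | ⟨k, hk, -⟩
    · exact h (hold.trans ih)
    · obtain ⟨-, hact, hpos⟩ := hS.newAnon_anon hnew
      exact hpos.ne' (hS.delta_eq_zero (hu n hact))
    · exact CanElem.anon_anon_ne u _ _ _ _ hk.symm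

def edgeTarget (R : Role) : CanElem → CanElem
  | CanElem.ind a =>
    if R = Role.atomic P₀ ∧ a = c then CanElem.ind d
    else if R = Role.inv P₀ ∧ a = d then CanElem.ind c
    else CanElem.anon (CanElem.ind a) R 0
  | CanElem.anon w S j => if S = R.flip then w else CanElem.anon (CanElem.anon w S j) R 0

lemma eq_edgeTarget_of_canInterp_roleMult_ne_zero {R : Role} {u v : CanElem}
    (h : (canInterp K₁).roleMult R u v ≠ 0) : v = edgeTarget P₀ c d R u := by
  have hS := singleEdgeStage_canStage T P₀ c d
  have hchild : (∀ i, u ∈ (canStage K₁ i).active →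
      1 ≤ (canStage K₁ i).toInterp.conceptMult (DLConcept.ex R) u) → v ≠ CanElem.anon u R 0 := by
    rintro hu rfl
    exact h (canInterp_roleMult_anon_eq_zero T P₀ c d hu 0)
  obtain ⟨i, hi⟩ : ∃ i, (canStage K₁ i).toInterp.roleMult R u v ≠ 0 := by
    by_contra! hall
    exact h (by rw [canInterp_roleMult, ENat.iSup_eq_zero]; exact hall)
  rcases (hS i).edge_shape R u v hi with ⟨rfl, rfl, rfl⟩ | ⟨rfl, rfl, rfl⟩ | rfl | rfl
  · simp [edgeTarget]
  · simp [edgeTarget]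
  · cases u with
    | ind a =>
      simp only [edgeTarget]
      split_ifs with h₁ h₂
      · obtain ⟨rfl, rfl⟩ := h₁
        exact absurd rfl (hchild fun i _ => (hS i).one_le_conceptMult_source)
      · obtain ⟨rfl, rfl⟩ := h₂
        exact absurd rfl (hchild fun i _ => (hS i).one_le_conceptMult_target)
      · rfl
    | anon w S j =>
      simp only [edgeTarget]
      split_ifs with h₁
      · subst h₁
        exact absurd rfl (hchild fun i hu => (hS i).one_le_conceptMult_of_anon_mem_active hu)
      · rfl
  · simp [edgeTarget]

lemma canInterp_singleton_rolesFunctional : (canInterp K₁).RolesFunctional :=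
  fun _ _ _ _ h₁ h₂ => (eq_edgeTarget_of_canInterp_roleMult_ne_zero T P₀ c d h₁).trans
    (eq_edgeTarget_of_canInterp_roleMult_ne_zero T P₀ c d h₂).symm

lemma canInterp_singleton_mult_le_one (f : Var → CanElem) (atm : QAtom) :
    atm.mult (canInterp K₁) f ≤ 1 := by
  have hS := singleEdgeStage_canStage T P₀ c d
  cases atm with
  | conceptAt A t => exact iSup_le fun i => (hS i).conceptMult_le_one (DLConcept.atomic A) _
  | roleAt Q t₁ t₂ => exact iSup_le fun i => (hS i).roleMult_le_one (Role.atomic Q) _ _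
  | eqAt v t =>
    simp only [QAtom.mult]
    split_ifs <;> simp

end SingletonABox

lemma Term.mem_varsOf {t : Term} {v : Var} : v ∈ t.varsOf ↔ t = Term.var v := by
  cases t <;> simp [Term.varsOf, eq_comm]

lemma QAtom.mem_vars {atm : QAtom} {v : Var} : v ∈ atm.vars ↔ Term.var v ∈ atm.terms := by
  cases atm <;> simp [QAtom.vars, QAtom.terms, Term.mem_varsOf, eq_comm]

lemma mem_termsOfList {t : Term} {l : List QAtom} :
    t ∈ termsOfList l ↔ ∃ atm ∈ l, t ∈ atm.terms := by
  induction l <;> simp_all [termsOfList]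

lemma CQ.mem_subAtoms {q : CQ} {z' : Finset Var} {atm : QAtom} :
    atm ∈ q.subAtoms z' ↔ atm ∈ q.atoms ∧ ∃ v ∈ z', v ∈ atm.vars := by
  simp [CQ.subAtoms]

lemma CQ.mem_tTerms {q : CQ} {z z' : Finset Var} {t : Term} :
    t ∈ q.tTerms z z' ↔ (∃ atm ∈ q.subAtoms z', t ∈ atm.terms) ∧ ¬ t.IsZVar z := by
  simp [CQ.tTerms, mem_termsOfList]

lemma mem_subVars {q : CQ} {z' : Finset Var} {v : Var} :
    v ∈ subVars q z' ↔ ∃ atm ∈ q.subAtoms z', v ∈ atm.vars := by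
  unfold subVars
  induction q.subAtoms z' <;> simp_all

lemma CQ.MAConnected.mem_of_mem_subAtoms {q : CQ} {z z' : Finset Var} (hma : q.MAConnected z z')
    {atm : QAtom} (hatm : atm ∈ q.subAtoms z') {v : Var} (hv : v ∈ atm.vars) (hvz : v ∈ z) :
    v ∈ z' := by
  obtain ⟨hatm, w, hw, hwv⟩ := CQ.mem_subAtoms.1 hatm
  exact hma.2.1 w hw v hvz <| .single
    ⟨⟨atm, hatm, QAtom.mem_vars.1 hwv, QAtom.mem_vars.1 hv⟩, ⟨w, hma.1 hw, rfl⟩, ⟨v, hvz, rfl⟩⟩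

section Propagation

variable {I : BagInterp} (hI : I.RolesFunctional) {f g : Var → I.Δ}
include hI

lemma termVal_eq_of_mult_ne_zero {atm : QAtom} (hf : atm.mult I f ≠ 0) (hg : atm.mult I g ≠ 0)
    {t t' : Term} (ht : t ∈ atm.terms) (ht' : t' ∈ atm.terms)
    (h : termVal I f t = termVal I g t) : termVal I f t' = termVal I g t' := by
  cases atm with
  | conceptAt A s =>
    simp only [QAtom.terms, List.mem_singleton] at ht ht'
    subst ht ht'
    exact h
  | roleAt P t₁ t₂ =>
    simp only [QAtom.terms, List.mem_cons, List.not_mem_nil, or_false] at ht ht'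
    have hf' : I.rI P (termVal I f t₁) (termVal I f t₂) ≠ 0 := hf
    have hg' : I.rI P (termVal I g t₁) (termVal I g t₂) ≠ 0 := hg
    rcases ht with rfl | rfl <;> rcases ht' with rfl | rfl
    · exact h
    · rw [← h] at hg'
      exact hI (Role.atomic P) _ _ _ hf' hg'
    · rw [← h] at hg'
      exact hI (Role.inv P) _ _ _ hf' hg'
    · exact h
  | eqAt v s =>
    have hconst : ∀ k : Var → I.Δ, (QAtom.eqAt v s).mult I k ≠ 0 →
        ∀ r ∈ (QAtom.eqAt v s).terms, termVal I k r = k v := by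
      intro k hk r hr
      have hks : k v = termVal I k s := by
        by_contra hne
        exact hk (if_neg hne)
      simp only [QAtom.terms, List.mem_cons, List.not_mem_nil, or_false] at hr
      rcases hr with rfl | rfl
      exacts [rfl, hks.symm]
    calc termVal I f t' = f v := hconst f hf t' ht'
      _ = termVal I f t := (hconst f hf t ht).symm
      _ = termVal I g t := h
      _ = g v := hconst g hg t ht
      _ = termVal I g t' := (hconst g hg t' ht').symm

variable {q : CQ} {z z' : Finset Var} (hma : q.MAConnected z z')
  (hf : ∀ atm ∈ q.subAtoms z', atm.mult I f ≠ 0) (hg : ∀ atm ∈ q.subAtoms z', atm.mult I g ≠ 0)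
include hma hf hg

lemma termVal_eq_of_reflTransGen {v₀ : Var} (hv₀ : v₀ ∈ z') (h₀ : f v₀ = g v₀) {t : Term}
    (ht : Relation.ReflTransGen (q.zAdj z) (Term.var v₀) t) :
    termVal I f t = termVal I g t := by
  induction ht with
  | refl => exact h₀
  | tail hpath hadj ih =>
    obtain ⟨⟨atm, hatm, hb, hc⟩, ⟨w, hwz, rfl⟩, -⟩ := hadj
    have hmem : atm ∈ q.subAtoms z' :=
      CQ.mem_subAtoms.2 ⟨hatm, w, hma.2.1 v₀ hv₀ w hwz hpath, QAtom.mem_vars.2 hb⟩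
    exact termVal_eq_of_mult_ne_zero hI (hf atm hmem) (hg atm hmem) hb hc ih

lemma eq_on_subVars_of_eq_on_tTerms {atm : QAtom} (hatm : atm ∈ q.subAtoms z') {t : Term} {v₀ : Var}
    (ht : t ∈ atm.terms) (htz : ¬ t.IsZVar z) (hv₀ : Term.var v₀ ∈ atm.terms) (hv₀z' : v₀ ∈ z')
    (htt : ∀ s ∈ q.tTerms z z', termVal I f s = termVal I g s)
    {v : Var} (hv : v ∈ subVars q z') : f v = g v := by
  have h₀ : f v₀ = g v₀ := termVal_eq_of_mult_ne_zero hI (hf atm hatm) (hg atm hatm) ht hv₀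
    (htt t (CQ.mem_tTerms.2 ⟨⟨atm, hatm, ht⟩, htz⟩))
  obtain ⟨a, ha, hva⟩ := mem_subVars.1 hv
  by_cases hvz : v ∈ z
  · exact termVal_eq_of_reflTransGen hI hma hf hg hv₀z' h₀
      (hma.2.2 v₀ hv₀z' v (hma.mem_of_mem_subAtoms ha hva hvz))
  · refine htt (Term.var v) (CQ.mem_tTerms.2 ⟨⟨a, ha, QAtom.mem_vars.1 hva⟩, ?_⟩)
    rintro ⟨w, hw, hwv⟩
    cases hwv
    exact hvz hw

end Propagation

lemma realQAnswer_le_one {T : TBox} {q : CQ} {z z' : Finset Var} {atm : QAtom}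
    (hma : q.MAConnected z z') (hatm : atm ∈ q.subAtoms z') {t : Term} {v₀ : Var}
    (ht : t ∈ atm.terms) (htz : ¬ t.IsZVar z) (hv₀ : Term.var v₀ ∈ atm.terms) (hv₀z' : v₀ ∈ z')
    (hfun : (canInterp ⟨T, alphaABox z' atm (freshA q z z') (freshB q)⟩).RolesFunctional)
    (hle : ∀ (f : Var → CanElem) (atm' : QAtom),
      atm'.mult (canInterp ⟨T, alphaABox z' atm (freshA q z z') (freshB q)⟩) f ≤ 1) :
    realQAnswer T q z z' atm ≤ 1 := by
  refine bagSum_le_one (fun f => (List.prod_le_pow_card _ 1 ?_).trans_eq (one_pow _)) ?_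
  · simp only [List.mem_map]
    rintro _ ⟨atm', -, rfl⟩
    exact hle _ _
  intro ⟨f, hfj, hft, _⟩ ⟨g, hgj, hgt, _⟩ hf hg
  refine Subtype.ext (funext fun v => ?_)
  by_cases hv : v ∈ subVars q z'
  · exact eq_on_subVars_of_eq_on_tTerms hfun hma
      (fun a ha h0 => hf (List.prod_eq_zero_iff.2 (List.mem_map.2 ⟨a, ha, h0⟩)))
      (fun a ha h0 => hg (List.prod_eq_zero_iff.2 (List.mem_map.2 ⟨a, ha, h0⟩)))
      hatm ht htz hv₀ hv₀z' (fun s hs => (hft s hs).trans (hgt s hs).symm) hv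
  · exact (hfj v hv).trans (hgj v hv).symm

lemma IsAlphaFor.exists_anchor {q : CQ} {z z' : Finset Var} {atm : QAtom}
    (h : IsAlphaFor q z z' atm) :
    ∃ t v₀, t ∈ atm.terms ∧ ¬ t.IsZVar z ∧ Term.var v₀ ∈ atm.terms ∧ v₀ ∈ z' := by
  rcases h.2 with ⟨P, t, v₀, hv₀, ht, rfl⟩ | ⟨P, t, v₀, hv₀, ht, rfl⟩ <;>
    exact ⟨t, v₀, by simp [QAtom.terms], ht, by simp [QAtom.terms], hv₀⟩

lemma IsAlphaFor.exists_alphaABox_eq {q : CQ} {z z' : Finset Var} {atm : QAtom}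
    (h : IsAlphaFor q z z' atm) (a b : Ind) :
    ∃ P c d, alphaABox z' atm a b = {Assertion.roleA P c d} := by
  rcases h.2 with ⟨P, t, v₀, -, -, rfl⟩ | ⟨P, t, v₀, -, -, rfl⟩ <;>
  · simp only [alphaABox]
    split_ifs
    exacts [⟨P, _, _, rfl⟩, ⟨P, _, _, rfl⟩]

theorem statement_19_general (K : Ontology)
    (q : CQ)
    (z : Finset Var)
    (z' : Finset Var) (hma : q.MAConnected z z')
    (atm : QAtom) (halpha : IsAlphaFor q z z' atm)
    (hreal : RealisableMA K.tbox q z z' atm) :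
    realQAnswer K.tbox q z z' atm = 1 := by
  refine le_antisymm ?_ hreal
  obtain ⟨t, v₀, ht, htz, hv₀, hv₀z'⟩ := halpha.exists_anchor
  obtain ⟨P, c, d, hA⟩ := halpha.exists_alphaABox_eq (freshA q z z') (freshB q)
  refine realQAnswer_le_one hma halpha.1 ht htz hv₀ hv₀z' ?_ ?_ <;> rw [hA]
  exacts [canInterp_singleton_rolesFunctional K.tbox P c d,
    canInterp_singleton_mult_le_one K.tbox P c d]

/-- Let `q(x) = ∃y. φ(x,y)` be a rooted CQ, `K = ⟨T,A⟩` a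
DL-Lite_core^bag ontology, `z ⊆ y` an equality-consistent subset, and `z'` a
nonempty ma-connected subset of `z` that is realisable by `T` (w.r.t. the
chosen atom `α_{z'}`).  Then `(q^a_{z'})^{C(⟨T,A'⟩)}(⟨⟩) = 1`: the Boolean
query `q^a_{z'}` has exactly one contributing valuation over the corresponding
one-assertion canonical model. -/
theorem statement_19 (K : Ontology) (hcore : TBox.IsCore K.tbox)
    (q : CQ) (hwf : q.WellFormed) (hr : q.Rooted)
    (z : Finset Var) (hz : z ⊆ q.existVars.toFinset)
    (hec : EqConsistent q z)
    (z' : Finset Var) (hma : q.MAConnected z z') (hne : z'.Nonempty)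
    (atm : QAtom) (halpha : IsAlphaFor q z z' atm)
    (hreal : RealisableMA K.tbox q z z' atm) :
    realQAnswer K.tbox q z z' atm = 1 :=
  statement_19_general K q z z' hma atm halpha hreal
end
end
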